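/- Let F be the free *-algebra on one generator x and let A be the quotient of F by the two-sided ideal generated by x² and x*² (a star-closed ideal, so A is a *-algebra). Then A is C*-representable: there exist a complex Hilbert space H and an injective *-representation of A on H. -/

import Mathlib

noncomputable section FreeStarAlgebraSection

/-- Letters of the free `*`-algebra on `n` generators: `Sum.inl i` is the generator `xᵢ`
and `Sum.inr i` is its formal adjoint `xᵢ*`. -/
abbrev FreeStarLetter (n : ℕ) : Type := Fin n ⊕ Fin n

/-- The free `*`-algebra on `n` generators: the free associative unital `ℂ`-algebra on the
`2n` generators `x₁, …, x_n, x₁*, …, x_n*`, realized as the monoid algebra over `ℂ` of the free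
monoid on the corresponding `2n` letters.  The involution (defined below) is the unique
conjugate-linear anti-automorphism exchanging `xᵢ` and `xᵢ*`. -/
abbrev FreeStarAlgebra (n : ℕ) : Type := MonoidAlgebra ℂ (FreeMonoid (FreeStarLetter n))

namespace FreeStarAlgebra

variable {n : ℕ}

/-- The involution on words: reverse the word and exchange the letters `xᵢ` and `xᵢ*`. -/
def wordStar (w : FreeMonoid (FreeStarLetter n)) : FreeMonoid (FreeStarLetter n) :=
  star (FreeMonoid.map Sum.swap w)

@[simp] theorem wordStar_mul (u v : FreeMonoid (FreeStarLetter n)) :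
    wordStar (u * v) = wordStar v * wordStar u := by
  simp [wordStar, map_mul, star_mul]

@[simp] theorem wordStar_one : wordStar (1 : FreeMonoid (FreeStarLetter n)) = 1 := by
  simp [wordStar]

@[simp] theorem wordStar_of (v : FreeStarLetter n) :
    wordStar (FreeMonoid.of v) = FreeMonoid.of v.swap := by
  simp [wordStar]

@[simp] theorem wordStar_wordStar (w : FreeMonoid (FreeStarLetter n)) :
    wordStar (wordStar w) = w := by
  induction w using FreeMonoid.recOn with
  | one => simp
  | of_mul x xs ih => simp [ih]

/-- The involution of the free `*`-algebra as an additive map: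
`∑ c_w • w  ↦  ∑ conj (c_w) • w*`. -/
def starAddHom : FreeStarAlgebra n →+ FreeStarAlgebra n :=
  (Finsupp.liftAddHom fun w =>
    (MonoidAlgebra.singleAddHom (wordStar w)).comp (starAddEquiv (R := ℂ)).toAddMonoidHom).comp
    MonoidAlgebra.coeffAddEquiv.toAddMonoidHom

theorem starAddHom_single (w : FreeMonoid (FreeStarLetter n)) (c : ℂ) :
    starAddHom (MonoidAlgebra.single w c) =
      MonoidAlgebra.single (wordStar w) (starRingEnd ℂ c) :=
  Finsupp.liftAddHom_apply_single (fun w =>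
    (MonoidAlgebra.singleAddHom (wordStar w)).comp (starAddEquiv (R := ℂ)).toAddMonoidHom) w c

instance instStarRing : StarRing (FreeStarAlgebra n) where
  star f := starAddHom f
  star_involutive f := by
    show starAddHom (starAddHom f) = f
    induction f using MonoidAlgebra.induction_linear with
    | zero => simp
    | add f g hf hg => simp [map_add, hf, hg]
    | single w c => simp [starAddHom_single]
  star_add f g := by
    show starAddHom (f + g) = starAddHom f + starAddHom g
    simp [map_add]
  star_mul f g := by
    show starAddHom (f * g) = starAddHom g * starAddHom f
    induction f using MonoidAlgebra.induction_linear with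
    | zero => simp
    | add f₁ f₂ h₁ h₂ => simp [add_mul, mul_add, map_add, h₁, h₂]
    | single w c =>
      induction g using MonoidAlgebra.induction_linear with
      | zero => simp
      | add g₁ g₂ h₁ h₂ => simp [add_mul, mul_add, map_add, h₁, h₂]
      | single w' c' =>
        rw [MonoidAlgebra.single_mul_single, starAddHom_single, starAddHom_single,
          starAddHom_single, MonoidAlgebra.single_mul_single]
        simp [wordStar, map_mul, star_mul, mul_comm]

@[simp] theorem star_single (w : FreeMonoid (FreeStarLetter n)) (c : ℂ) :
    star (MonoidAlgebra.single w c : FreeStarAlgebra n) =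
      MonoidAlgebra.single (wordStar w) (starRingEnd ℂ c) :=
  starAddHom_single w c

instance instStarModule : StarModule ℂ (FreeStarAlgebra n) where
  star_smul c f := by
    show starAddHom (c • f) = starRingEnd ℂ c • starAddHom f
    induction f using MonoidAlgebra.induction_linear with
    | zero => simp
    | add f g hf hg => simp [smul_add, map_add, hf, hg]
    | single w c' =>
      rw [MonoidAlgebra.smul_single, starAddHom_single, starAddHom_single, MonoidAlgebra.smul_single]
      simp [smul_eq_mul]

/-- The `i`-th generator `xᵢ` of the free `*`-algebra. -/
def gen (n : ℕ) (i : Fin n) : FreeStarAlgebra n :=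
  MonoidAlgebra.single (FreeMonoid.of (Sum.inl i)) 1

@[simp] theorem star_gen (i : Fin n) :
    star (gen n i) = MonoidAlgebra.single (FreeMonoid.of (Sum.inr i)) 1 := by
  simp [gen]

end FreeStarAlgebra
end FreeStarAlgebraSection

section CStarRep

variable (A : Type) [Ring A] [Algebra ℂ A] [Star A]

/-- `A` is C*-representable: there is an injective `*`-representation of `A` by bounded
operators on some complex Hilbert space. -/
def CStarRepresentable : Prop :=
  ∃ (H : Type) (_ : NormedAddCommGroup H) (_ : InnerProductSpace ℂ H) (_ : CompleteSpace H)
    (π : A →⋆ₐ[ℂ] (H →L[ℂ] H)), Function.Injective π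

end CStarRep

noncomputable section Stmt16
open FreeStarAlgebra

/-- The generator `x` of the free `*`-algebra on one generator. -/
def x : FreeStarAlgebra 1 := gen 1 0

/-- The relations `x² = 0` and `x*² = 0`. -/
def rel : FreeStarAlgebra 1 → FreeStarAlgebra 1 → Prop :=
  fun a b => (a = x * x ∨ a = star x * star x) ∧ b = 0

theorem rel_star : ∀ a b, rel a b → rel (star a) (star b) := by
  rintro a b ⟨(rfl | rfl), rfl⟩ <;>
    exact ⟨by simp [star_mul], by simp⟩

/-- The `*`-algebra `A = ℂ⟨x, x* | x² = 0, x*² = 0⟩`, the quotient of the free `*`-algebra on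
one generator by the star-closed two-sided ideal generated by `x²` and `x*²`. -/
abbrev Axx : Type := RingQuot rel

instance : StarRing Axx := RingQuot.starRing rel rel_star

/-!
For real `t`, `x ↦ t E₀₁` defines a `*`-representation `ρₜ` of `Axx` on `ℂ²`, since `E₀₁² = 0`.
`Axx` is spanned by the alternating words in `x, x*`, and `ρₜ` sends such a word `w` to `t ^ |w|`
times a matrix unit whose row is fixed by the first letter of `w`; as an alternating word is
determined by its first letter and its length, the entries of `ρₜ a` are polynomials in `t` whose
coefficients include every coefficient of `a`. So `ρₜ a = 0` for infinitely many `t` forces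
`a = 0`, and the block-diagonal sum `⊕ₙ ρ_{1/(n+1)}` on `ℓ²(ℕ, ℂ²)` is faithful.
-/

open scoped ENNReal

namespace lp

variable {ι : Type*} {E : ι → Type*} [∀ i, NormedAddCommGroup (E i)]
  [∀ i, InnerProductSpace ℂ (E i)] [∀ i, CompleteSpace (E i)]

theorem adjoint_mapCLM (T : ∀ i, E i →L[ℂ] E i) {K : ℝ} (hK : 0 ≤ K) (hTK : ∀ i, ‖T i‖ ≤ K) :
    (mapCLM 2 T hK hTK).adjoint =
      mapCLM 2 (fun i => (T i).adjoint) hK (fun i => by simpa using hTK i) := by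
  symm
  rw [ContinuousLinearMap.eq_adjoint_iff]
  intro x y
  simp only [lp.inner_eq_tsum, mapCLM_apply_coe, ContinuousLinearMap.adjoint_inner_left]

-- `lp B ∞` is an algebra only when every `B i` satisfies `‖1‖ = 1`.
variable [∀ i, Nontrivial (E i)]

def blockDiagonal :
    lp (fun i => E i →L[ℂ] E i) ∞ →⋆ₐ[ℂ] (lp E 2 →L[ℂ] lp E 2) where
  toFun T := lp.mapCLM 2 (fun i => T i) (norm_nonneg T) (lp.norm_apply_le_norm (by simp) T)
  map_one' := by
    ext x i
    simp only [mapCLM_apply_coe, infty_coeFn_one, Pi.one_apply, one_apply_eq_self]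
  map_mul' S T := by
    ext x i
    simp only [mapCLM_apply_coe, infty_coeFn_mul, Pi.mul_apply, mul_apply_eq_comp]
  map_zero' := by ext x i; simp
  map_add' S T := by ext x i; simp
  commutes' c := by
    ext x i
    simp only [mapCLM_apply_coe, Algebra.algebraMap_eq_smul_one, coeFn_smul, infty_coeFn_one,
      Pi.smul_apply, Pi.one_apply, FunLike.coe_smul, one_apply_eq_self]
  map_star' T := by
    simp only [ContinuousLinearMap.star_eq_adjoint, adjoint_mapCLM]
    ext x i
    simp only [mapCLM_apply_coe, lp.star_apply, ContinuousLinearMap.star_eq_adjoint]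

theorem blockDiagonal_apply (T : lp (fun i => E i →L[ℂ] E i) ∞) (x : lp E 2) (i : ι) :
    blockDiagonal T x i = T i (x i) :=
  rfl

theorem blockDiagonal_injective :
    Function.Injective (blockDiagonal : lp (fun i => E i →L[ℂ] E i) ∞ → _) := by
  classical
  refine (injective_iff_map_eq_zero _).2 fun T hT => ?_
  ext i v
  simpa [blockDiagonal_apply] using congr($hT (lp.single 2 i v) i)

def evalStarAlgHom (i : ι) : lp (fun i => E i →L[ℂ] E i) ∞ →⋆ₐ[ℂ] (E i →L[ℂ] E i) where
  toFun T := T i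
  map_one' := congr_fun infty_coeFn_one i
  map_mul' S T := congr_fun (infty_coeFn_mul S T) i
  map_zero' := rfl
  map_add' _ _ := rfl
  commutes' c := by
    simp only [Algebra.algebraMap_eq_smul_one, coeFn_smul, infty_coeFn_one, Pi.smul_apply,
      Pi.one_apply]
  map_star' T := lp.star_apply T i

end lp

namespace FreeStarAlgebra

variable {n : ℕ} {B : Type*} [Ring B] [StarRing B]

def letterImage (y : Fin n → B) : FreeStarLetter n → B := Sum.elim y (star ∘ y)

theorem letterImage_swap (y : Fin n → B) (a : FreeStarLetter n) :
    letterImage y a.swap = star (letterImage y a) := by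
  cases a <;> simp [letterImage]

theorem lift_letterImage_wordStar (y : Fin n → B) (w : FreeMonoid (FreeStarLetter n)) :
    FreeMonoid.lift (letterImage y) (wordStar w) = star (FreeMonoid.lift (letterImage y) w) := by
  induction w using FreeMonoid.recOn with
  | one => simp
  | of_mul a w ih => simp [ih, letterImage_swap]

theorem letterImage_mul_self {y : B} (hy : y * y = 0) (a : FreeStarLetter 1) :
    letterImage (fun _ => y) a * letterImage (fun _ => y) a = 0 := by
  rcases a with _ | _
  · exact hy
  · simp [letterImage, ← star_mul, hy]

/-- A word in `y, y*` with two equal adjacent letters contains `y²` or `(y*)²`. -/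
theorem prod_map_letterImage_eq_zero {y : B} (hy : y * y = 0) {l : List (FreeStarLetter 1)}
    (hl : ¬ l.IsChain (· ≠ ·)) : (l.map (letterImage fun _ => y)).prod = 0 := by
  induction l with
  | nil => exact absurd .nil hl
  | cons a l ih =>
    rcases l with _ | ⟨b, r⟩
    · exact absurd (.singleton a) hl
    rw [List.isChain_cons_cons, not_and_or, not_ne_iff] at hl
    rcases hl with rfl | hl
    · simp only [List.map_cons, List.prod_cons, ← mul_assoc, letterImage_mul_self hy, zero_mul]
    · rw [List.map_cons, List.prod_cons, ih hl, mul_zero]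

variable [Algebra ℂ B]

theorem starAlgHom_ext {φ ψ : FreeStarAlgebra n →⋆ₐ[ℂ] B} (h : ∀ i, φ (gen n i) = ψ (gen n i)) :
    φ = ψ := by
  suffices φ.toAlgHom = ψ.toAlgHom from StarAlgHom.ext (AlgHom.congr_fun this)
  refine MonoidAlgebra.algHom_ext (fun w => ?_) (Subsingleton.elim _ _)
  induction w using FreeMonoid.recOn with
  | one => rw [← MonoidAlgebra.one_def, map_one, map_one]
  | of_mul a w ih =>
    rw [← one_mul (1 : ℂ), ← MonoidAlgebra.single_mul_single, map_mul, map_mul, ih]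
    congr 1
    rcases a with i | i
    · exact h i
    · simpa only [StarAlgHom.coe_toAlgHom, ← map_star, star_gen] using congr(star $(h i))

variable [StarModule ℂ B]

theorem monoidAlgebraLift_star (y : Fin n → B) (f : FreeStarAlgebra n) :
    MonoidAlgebra.lift ℂ B _ (FreeMonoid.lift (letterImage y)) (star f) =
      star (MonoidAlgebra.lift ℂ B _ (FreeMonoid.lift (letterImage y)) f) := by
  induction f using MonoidAlgebra.induction_linear with
  | zero => simp
  | add f g hf hg => rw [star_add, map_add, map_add, star_add, hf, hg]
  | single w c => simp [lift_letterImage_wordStar, star_smul]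

def lift (y : Fin n → B) : FreeStarAlgebra n →⋆ₐ[ℂ] B :=
  { MonoidAlgebra.lift ℂ B _ (FreeMonoid.lift (letterImage y)) with
    map_star' := monoidAlgebraLift_star y }

@[simp] theorem lift_gen (y : Fin n → B) (i : Fin n) : lift y (gen n i) = y i := by
  simp [lift, gen, letterImage]

theorem lift_single (y : Fin n → B) (w : FreeMonoid (FreeStarLetter n)) (c : ℂ) :
    lift y (MonoidAlgebra.single w c) = c • (w.toList.map (letterImage y)).prod := by
  simp [lift, FreeMonoid.lift_apply]

theorem lift_apply (y : Fin n → B) (f : FreeStarAlgebra n) :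
    lift y f = f.coeff.sum fun w c => c • (w.toList.map (letterImage y)).prod := by
  simp [lift, MonoidAlgebra.lift_apply, FreeMonoid.lift_apply]

end FreeStarAlgebra

namespace Axx

variable {B : Type*} [Ring B] [StarRing B] [Algebra ℂ B]

def mk : FreeStarAlgebra 1 →⋆ₐ[ℂ] Axx :=
  { RingQuot.mkAlgHom ℂ rel with
    map_star' a := by
      show RingQuot.mkAlgHom ℂ rel (star a) = star (RingQuot.mkAlgHom ℂ rel a)
      simp only [RingQuot.mkAlgHom_def, RingQuot.mkRingHom_def, RingHom.coe_mk, MonoidHom.coe_mk,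
        OneHom.coe_mk, AlgHom.coe_mk]
      rfl }

theorem mk_surjective : Function.Surjective mk :=
  fun a => RingQuot.mkAlgHom_surjective ℂ rel a

instance : StarModule ℂ Axx where
  star_smul c a := by
    obtain ⟨f, rfl⟩ := mk_surjective a
    rw [← map_smul, ← map_star, star_smul, map_smul, map_star]

theorem mk_x_mul_self : mk x * mk x = 0 := by
  rw [← map_mul, ← map_zero mk]
  exact RingQuot.mkAlgHom_rel ℂ (show rel (x * x) 0 from ⟨.inl rfl, rfl⟩)

theorem starAlgHom_ext {φ ψ : Axx →⋆ₐ[ℂ] B} (h : φ (mk x) = ψ (mk x)) : φ = ψ := by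
  have : φ.comp mk = ψ.comp mk :=
    FreeStarAlgebra.starAlgHom_ext fun i => by rw [Subsingleton.elim i 0]; exact h
  ext a
  obtain ⟨f, rfl⟩ := mk_surjective a
  exact congr($this f)

theorem mk_eq_lift : mk = FreeStarAlgebra.lift (fun _ => mk x) :=
  FreeStarAlgebra.starAlgHom_ext fun i => by simp [Subsingleton.elim i 0, x]

theorem mk_single_eq_zero {w : FreeMonoid (FreeStarLetter 1)} (hw : ¬ w.toList.IsChain (· ≠ ·))
    (c : ℂ) : mk (MonoidAlgebra.single w c) = 0 := by
  rw [mk_eq_lift, FreeStarAlgebra.lift_single,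
    FreeStarAlgebra.prod_map_letterImage_eq_zero mk_x_mul_self hw, smul_zero]

theorem exists_mk_eq_of_isChain (a : Axx) : ∃ f : FreeStarAlgebra 1,
    (∀ w ∈ f.coeff.support, w.toList.IsChain (· ≠ ·)) ∧ mk f = a := by
  classical
  obtain ⟨g, rfl⟩ := mk_surjective a
  induction g using MonoidAlgebra.induction_linear with
  | zero => exact ⟨0, by simp, rfl⟩
  | add g₁ g₂ h₁ h₂ =>
    obtain ⟨f₁, hf₁, e₁⟩ := h₁
    obtain ⟨f₂, hf₂, e₂⟩ := h₂
    refine ⟨f₁ + f₂, fun w hw => ?_, by rw [map_add, map_add, e₁, e₂]⟩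
    rcases Finset.mem_union.1 (Finsupp.support_add hw) with h | h
    exacts [hf₁ w h, hf₂ w h]
  | single w c =>
    by_cases hw : w.toList.IsChain (· ≠ ·)
    · refine ⟨MonoidAlgebra.single w c, fun w' hw' => ?_, rfl⟩
      rwa [Finset.mem_singleton.1 (Finsupp.support_single_subset hw')]
    · exact ⟨0, by simp, by rw [map_zero, mk_single_eq_zero hw]⟩

variable [StarModule ℂ B]

theorem lift_respects_rel (y : B) (hy : y * y = 0) ⦃a b : FreeStarAlgebra 1⦄ (h : rel a b) :
    FreeStarAlgebra.lift (fun _ => y) a = FreeStarAlgebra.lift (fun _ => y) b := by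
  rcases h with ⟨rfl | rfl, rfl⟩
  · simp only [map_mul, x, FreeStarAlgebra.lift_gen, hy, map_zero]
  · simp only [map_mul, map_star, x, FreeStarAlgebra.lift_gen, ← star_mul, hy, star_zero, map_zero]

def lift (y : B) (hy : y * y = 0) : Axx →⋆ₐ[ℂ] B :=
  { RingQuot.liftAlgHom ℂ ⟨(FreeStarAlgebra.lift fun _ => y).toAlgHom, lift_respects_rel y hy⟩ with
    map_star' := by
      intro a
      obtain ⟨f, rfl⟩ := mk_surjective a
      rw [← map_star]
      change RingQuot.liftAlgHom ℂ _ (RingQuot.mkAlgHom ℂ rel (star f)) =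
        star (RingQuot.liftAlgHom ℂ _ (RingQuot.mkAlgHom ℂ rel f))
      rw [RingQuot.liftAlgHom_mkAlgHom_apply, RingQuot.liftAlgHom_mkAlgHom_apply,
        StarAlgHom.coe_toAlgHom, map_star] }

theorem lift_mk (y : B) (hy : y * y = 0) (f : FreeStarAlgebra 1) :
    lift y hy (mk f) = FreeStarAlgebra.lift (fun _ => y) f :=
  RingQuot.liftAlgHom_mkAlgHom_apply ℂ _ _ f

theorem lift_mk_x (y : B) (hy : y * y = 0) : lift y hy (mk x) = y := by
  rw [lift_mk, x, FreeStarAlgebra.lift_gen]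

theorem map_lift {C : Type*} [Ring C] [StarRing C] [Algebra ℂ C] [StarModule ℂ C]
    (φ : B →⋆ₐ[ℂ] C) (y : B) (hy : y * y = 0) {z : C} (hz : z * z = 0) (h : φ y = z) (a : Axx) :
    φ (lift y hy a) = lift z hz a :=
  congr($(starAlgHom_ext (φ := φ.comp (lift y hy)) (ψ := lift z hz)
    (by rw [StarAlgHom.comp_apply, lift_mk_x, lift_mk_x, h])) a)

section MatrixModel

open Matrix Polynomial

def letterRow : FreeStarLetter 1 → Fin 2 := Sum.elim (fun _ => 0) (fun _ => 1)

/-- `x ↦ E₀₁` and `x* ↦ E₁₀`. -/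
def letterMatrix (a : FreeStarLetter 1) : Matrix (Fin 2) (Fin 2) ℂ :=
  single (letterRow a) (letterRow a.swap) 1

def wordMatrix (l : List (FreeStarLetter 1)) : Matrix (Fin 2) (Fin 2) ℂ :=
  (l.map letterMatrix).prod

theorem eq_swap_of_ne {a b : FreeStarLetter 1} (h : a ≠ b) : b = a.swap := by
  rcases a with i | i <;> rcases b with j | j <;> simp_all [Subsingleton.elim i j]

theorem letterRow_injective : Function.Injective letterRow := by
  rintro (i | i) (j | j) h <;> simp_all [letterRow, Subsingleton.elim i j]

theorem eq_of_isChain_cons {a : FreeStarLetter 1} {l l' : List (FreeStarLetter 1)}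
    (h : (a :: l).IsChain (· ≠ ·)) (h' : (a :: l').IsChain (· ≠ ·))
    (hlen : l.length = l'.length) : l = l' := by
  induction l generalizing a l' with
  | nil => exact (List.length_eq_zero_iff.1 hlen.symm).symm
  | cons b l ih =>
    rcases l' with _ | ⟨b', l'⟩
    · simp at hlen
    rw [List.isChain_cons_cons] at h h'
    obtain rfl : b = b' := (eq_swap_of_ne h.1).trans (eq_swap_of_ne h'.1).symm
    rw [ih h.2 h'.2 (by simpa using hlen)]

theorem wordMatrix_cons_eq_single {a : FreeStarLetter 1} {l : List (FreeStarLetter 1)}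
    (h : (a :: l).IsChain (· ≠ ·)) : ∃ j, wordMatrix (a :: l) = single (letterRow a) j 1 := by
  induction l generalizing a with
  | nil => exact ⟨_, by simp [wordMatrix, letterMatrix]; rfl⟩
  | cons b l ih =>
    rw [List.isChain_cons_cons] at h
    obtain ⟨j, hj⟩ := ih h.2
    refine ⟨j, ?_⟩
    rw [wordMatrix, List.map_cons, List.prod_cons, ← wordMatrix, hj, letterMatrix,
      eq_swap_of_ne h.1, single_mul_single_same, one_mul]

theorem wordMatrix_cons_apply_of_ne {a : FreeStarLetter 1} {l : List (FreeStarLetter 1)}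
    {i : Fin 2} (hi : i ≠ letterRow a) (j : Fin 2) : wordMatrix (a :: l) i j = 0 := by
  rw [wordMatrix, List.map_cons, List.prod_cons, letterMatrix]
  exact single_mul_apply_of_ne _ _ _ _ _ hi _

theorem exists_wordMatrix_apply_ne_zero {w : List (FreeStarLetter 1)} (hw : w.IsChain (· ≠ ·)) :
    ∃ i j, wordMatrix w i j ≠ 0 ∧ ∀ w' : List (FreeStarLetter 1), w'.IsChain (· ≠ ·) →
      w'.length = w.length → wordMatrix w' i j ≠ 0 → w' = w := by
  rcases w with _ | ⟨a, l⟩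
  · exact ⟨0, 0, by simp [wordMatrix], fun w' _ hlen _ => List.length_eq_zero_iff.1 hlen⟩
  obtain ⟨j, hj⟩ := wordMatrix_cons_eq_single hw
  refine ⟨letterRow a, j, by simp [hj], fun w' hw' hlen hne => ?_⟩
  rcases w' with _ | ⟨a', l'⟩
  · simp at hlen
  obtain rfl : a' = a :=
    letterRow_injective (not_imp_comm.1 (wordMatrix_cons_apply_of_ne · j) hne).symm
  rw [eq_of_isChain_cons hw' hw (by simpa using hlen)]

def matrixGen (t : ℝ) : Matrix (Fin 2) (Fin 2) ℂ := single 0 1 (t : ℂ)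

theorem matrixGen_mul_self (t : ℝ) : matrixGen t * matrixGen t = 0 :=
  single_mul_single_of_ne _ _ _ _ (by decide) _

theorem letterImage_matrixGen (t : ℝ) (a : FreeStarLetter 1) :
    FreeStarAlgebra.letterImage (fun _ => matrixGen t) a = (t : ℂ) • letterMatrix a := by
  rcases a with _ | _ <;>
    simp [FreeStarAlgebra.letterImage, matrixGen, letterMatrix, letterRow, star_eq_conjTranspose,
      conjTranspose_single, smul_single]

theorem prod_map_letterImage_matrixGen (t : ℝ) (l : List (FreeStarLetter 1)) :
    (l.map (FreeStarAlgebra.letterImage fun _ => matrixGen t)).prod =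
      (t : ℂ) ^ l.length • wordMatrix l := by
  induction l with
  | nil => simp [wordMatrix]
  | cons a l ih =>
    simp only [List.map_cons, List.prod_cons, ih, letterImage_matrixGen, wordMatrix,
      smul_mul_smul, List.length_cons, pow_succ']

theorem lift_matrixGen_mk (t : ℝ) (f : FreeStarAlgebra 1) :
    lift (matrixGen t) (matrixGen_mul_self t) (mk f) =
      f.coeff.sum fun w c => (c * (t : ℂ) ^ w.toList.length) • wordMatrix w.toList := by
  simp only [lift_mk, FreeStarAlgebra.lift_apply, prod_map_letterImage_matrixGen, smul_smul]

theorem eq_zero_of_forall_lift_matrixGen_eq_zero {s : Set ℝ} (hs : s.Infinite) {a : Axx}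
    (h : ∀ t ∈ s, lift (matrixGen t) (matrixGen_mul_self t) a = 0) : a = 0 := by
  obtain ⟨f, hf, rfl⟩ := exists_mk_eq_of_isChain a
  suffices f = 0 by rw [this, map_zero]
  ext w
  by_contra hw
  have hw' : w ∈ f.coeff.support := Finsupp.mem_support_iff.2 hw
  obtain ⟨i, j, hij, huniq⟩ := exists_wordMatrix_apply_ne_zero (hf w hw')
  -- `P.eval t` is the `(i, j)` entry of `lift (matrixGen t) _ (mk f)`.
  set P : ℂ[X] := ∑ w' ∈ f.coeff.support,
    C (f.coeff w' * wordMatrix w'.toList i j) * X ^ w'.toList.length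
  have hP : P = 0 := by
    refine P.eq_zero_of_infinite_isRoot ((hs.image Complex.ofReal_injective.injOn).mono ?_)
    rintro _ ⟨t, ht, rfl⟩
    have := congr($(h t ht) i j)
    simp only [lift_matrixGen_mk, Finsupp.sum, Matrix.sum_apply, Matrix.smul_apply, smul_eq_mul] at this
    simpa [P, eval_finsetSum, mul_right_comm] using this
  have hcoeff : P.coeff w.toList.length = f.coeff w * wordMatrix w.toList i j := by
    simp only [P, finsetSum_coeff, coeff_C_mul_X_pow]
    refine (Finset.sum_eq_single w (fun w' hw'' hne => ?_) (absurd hw')).trans (if_pos rfl)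
    refine ite_eq_right_iff.2 fun hlen => mul_eq_zero_of_right _ (not_not.1 fun hM => hne ?_)
    exact FreeMonoid.toList.injective (huniq _ (hf w' hw'') hlen.symm hM)
  exact hw (by simpa [hP, hij] using hcoeff)

theorem matrixGen_eq_smul (t : ℝ) : matrixGen t = (t : ℂ) • single 0 1 1 := by
  rw [matrixGen, smul_single, smul_eq_mul, mul_one]

def diagonalGen : lp (fun _ : ℕ => EuclideanSpace ℂ (Fin 2) →L[ℂ] EuclideanSpace ℂ (Fin 2)) ∞ :=
  ⟨fun n => toEuclideanCLM (𝕜 := ℂ) (n := Fin 2) (matrixGen ((n : ℝ) + 1)⁻¹),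
    memℓp_infty ⟨‖toEuclideanCLM (𝕜 := ℂ) (n := Fin 2) (single 0 1 1)‖, by
      rintro _ ⟨n, rfl⟩
      dsimp only
      rw [matrixGen_eq_smul, map_smul, norm_smul, Complex.norm_real,
        Real.norm_of_nonneg (by positivity)]
      exact mul_le_of_le_one_left (norm_nonneg _) (inv_le_one_of_one_le₀ (by simp))⟩⟩

theorem diagonalGen_mul_self : diagonalGen * diagonalGen = 0 := by
  ext n : 2
  rw [lp.infty_coeFn_mul, Pi.mul_apply]
  simp only [diagonalGen, ← map_mul, matrixGen_mul_self, map_zero, lp.coeFn_zero, Pi.zero_apply]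

theorem lift_diagonalGen_injective : Function.Injective (lift diagonalGen diagonalGen_mul_self) := by
  refine (injective_iff_map_eq_zero _).2 fun a ha => eq_zero_of_forall_lift_matrixGen_eq_zero
    (Set.infinite_range_of_injective (f := fun n : ℕ => ((n : ℝ) + 1)⁻¹) fun m n h => ?_) ?_
  · simpa using h
  rintro _ ⟨n, rfl⟩
  let φ := (toEuclideanCLM (𝕜 := ℂ) (n := Fin 2)).toStarAlgHom
  have hφ : φ (matrixGen ((n : ℝ) + 1)⁻¹) * φ (matrixGen ((n : ℝ) + 1)⁻¹) = 0 := by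
    rw [← map_mul, matrixGen_mul_self, map_zero]
  have h1 : lp.evalStarAlgHom n (lift diagonalGen diagonalGen_mul_self a) = lift _ hφ a :=
    map_lift (lp.evalStarAlgHom n) diagonalGen diagonalGen_mul_self hφ rfl a
  rw [ha, map_zero, ← map_lift φ _ (matrixGen_mul_self _) hφ rfl] at h1
  exact toEuclideanCLM.injective (h1.symm.trans (map_zero _).symm)

end MatrixModel

end Axx

/-- the `*`-algebra `ℂ⟨x, x* | x² = 0, x*² = 0⟩` is C*-representable. -/
theorem axx_cstarRepresentable : CStarRepresentable Axx :=
  ⟨lp (fun _ : ℕ => EuclideanSpace ℂ (Fin 2)) 2, inferInstance, inferInstance, inferInstance,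
    lp.blockDiagonal.comp (Axx.lift Axx.diagonalGen Axx.diagonalGen_mul_self),
    lp.blockDiagonal_injective.comp Axx.lift_diagonalGen_injective⟩

end Stmt16
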